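/- arXiv:1406.5366 — 3 statements merged into one kernel-verified Lean document; each statement's English description precedes it below -/
import Mathlib

section
/- Let A and B be n×n real symmetric matrices, and let μ₁ ≤ μ₂ ≤ … ≤ μₙ and ν₁ ≤ ν₂ ≤ … ≤ νₙ be the eigenvalues of A and B respectively, listed with multiplicity in nondecreasing order. Then for every l = 1, …, n, |μ_l − ν_l| ≤ n · max_{1≤i,j≤n} |A_{ij} − B_{ij}|. -/
/-!
Weyl's perturbation argument. If `⟪x, (B - A) x⟫ ≤ c ‖x‖²` for all `x`, pick a nonzero `x` in the
intersection of the span of eigenvectors of `A` for `μ₁, …, μ_l` (dimension `l`) and the span of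
eigenvectors of `B` for `ν_l, …, ν_n` (dimension `n - l + 1`); on it `ν_l ‖x‖² ≤ ⟪x, B x⟫ ≤
⟪x, A x⟫ + c ‖x‖² ≤ (μ_l + c) ‖x‖²`. Bounding each entry of `B - A` by `K` gives
`⟪x, (B - A) x⟫ ≤ K (∑ |xᵢ|)² ≤ n K ‖x‖²` by Cauchy–Schwarz.
-/

open scoped RealInnerProductSpace
open Matrix Module

lemma Submodule.exists_mem_inf_ne_zero_of_finrank_lt {K V : Type*} [DivisionRing K]
    [AddCommGroup V] [Module K V] [FiniteDimensional K V] {s t : Submodule K V}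
    (h : finrank K V < finrank K s + finrank K t) : ∃ x ∈ s, x ∈ t ∧ x ≠ 0 := by
  by_contra! hst
  exact h.not_ge (Submodule.finrank_add_finrank_le_of_disjoint (Submodule.disjoint_def.mpr hst))

lemma Matrix.inner_toEuclideanLin_self_le_card_mul {m : Type*} [Fintype m] [DecidableEq m]
    (M : Matrix m m ℝ) {K : ℝ} (hK0 : 0 ≤ K) (hK : ∀ i j, |M i j| ≤ K)
    (x : EuclideanSpace ℝ m) :
    ⟪x, toEuclideanLin M x⟫ ≤ Fintype.card m * K * ⟪x, x⟫ := by
  have hquad : ⟪x, toEuclideanLin M x⟫ = ∑ i, ∑ j, M i j * x j * x i := by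
    simp [PiLp.inner_apply, mulVec, dotProduct, Finset.sum_mul]
  have hnorm : ⟪x, x⟫ = ∑ i, |x i| ^ 2 := by
    simp [EuclideanSpace.norm_sq_eq]
  calc ⟪x, toEuclideanLin M x⟫ ≤ ∑ i, ∑ j, K * |x j| * |x i| := by
        rw [hquad]
        refine Finset.sum_le_sum fun i _ => Finset.sum_le_sum fun j _ => ?_
        calc M i j * x j * x i ≤ |M i j| * |x j| * |x i| := by
              simpa only [abs_mul] using le_abs_self (M i j * x j * x i)
          _ ≤ K * |x j| * |x i| := by gcongr; exact hK i j
    _ = K * (∑ i, |x i|) ^ 2 := by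
        rw [sq, Finset.sum_mul_sum, Finset.mul_sum]
        refine Finset.sum_congr rfl fun i _ => ?_
        rw [Finset.mul_sum]
        exact Finset.sum_congr rfl fun j _ => by ring
    _ ≤ K * (Fintype.card m * ∑ i, |x i| ^ 2) := by
        gcongr
        simpa using sq_sum_le_card_mul_sum_sq (s := Finset.univ) (f := fun i => |x i|)
    _ = Fintype.card m * K * ⟪x, x⟫ := by rw [hnorm]; ring

namespace Matrix.IsHermitian

section

variable {m : Type*} [Fintype m] [DecidableEq m] {A : Matrix m m ℝ} (hA : A.IsHermitian)

def eigenvectorSpan (S : Finset m) : Submodule ℝ (EuclideanSpace ℝ m) :=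
  Submodule.span ℝ (hA.eigenvectorBasis '' S)

lemma finrank_eigenvectorSpan (S : Finset m) : finrank ℝ (hA.eigenvectorSpan S) = S.card := by
  rw [eigenvectorSpan, Set.image_eq_range, finrank_span_eq_card]
  · simp
  · exact hA.eigenvectorBasis.orthonormal.linearIndependent.comp _ Subtype.val_injective

lemma inner_eigenvectorBasis_eq_zero {S : Finset m} {x : EuclideanSpace ℝ m}
    (hx : x ∈ hA.eigenvectorSpan S) {i : m} (hi : i ∉ S) : ⟪hA.eigenvectorBasis i, x⟫ = 0 := by
  refine (Submodule.mem_orthogonal_singleton_iff_inner_right (𝕜 := ℝ)).mp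
    (Submodule.span_le.mpr ?_ hx)
  rintro _ ⟨j, hj, rfl⟩
  exact Submodule.mem_orthogonal_singleton_iff_inner_right.mpr <|
    hA.eigenvectorBasis.orthonormal.2 fun h => hi (h ▸ hj)

lemma toEuclideanLin_eigenvectorBasis (i : m) :
    toEuclideanLin A (hA.eigenvectorBasis i) = hA.eigenvalues i • hA.eigenvectorBasis i := by
  ext1
  simp [hA.mulVec_eigenvectorBasis]

lemma inner_toEuclideanLin_self_eq_sum (x : EuclideanSpace ℝ m) :
    ⟪x, toEuclideanLin A x⟫ = ∑ i, hA.eigenvalues i * ⟪hA.eigenvectorBasis i, x⟫ ^ 2 := by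
  rw [← hA.eigenvectorBasis.sum_inner_mul_inner]
  refine Finset.sum_congr rfl fun i _ => ?_
  rw [← isSymmetric_toEuclideanLin_iff.mpr hA, toEuclideanLin_eigenvectorBasis,
    real_inner_smul_left, real_inner_comm]
  ring

lemma inner_self_eq_sum_sq (x : EuclideanSpace ℝ m) :
    ⟪x, x⟫ = ∑ i, ⟪hA.eigenvectorBasis i, x⟫ ^ 2 := by
  rw [← hA.eigenvectorBasis.sum_inner_mul_inner]
  simp only [real_inner_comm x, sq]

lemma inner_toEuclideanLin_self_le {S : Finset m} {c : ℝ} (hc : ∀ i ∈ S, hA.eigenvalues i ≤ c)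
    {x : EuclideanSpace ℝ m} (hx : x ∈ hA.eigenvectorSpan S) :
    ⟪x, toEuclideanLin A x⟫ ≤ c * ⟪x, x⟫ := by
  rw [hA.inner_toEuclideanLin_self_eq_sum, hA.inner_self_eq_sum_sq, Finset.mul_sum]
  refine Finset.sum_le_sum fun i _ => ?_
  by_cases hi : i ∈ S
  · exact mul_le_mul_of_nonneg_right (hc i hi) (sq_nonneg _)
  · simp [hA.inner_eigenvectorBasis_eq_zero hx hi]

lemma le_inner_toEuclideanLin_self {S : Finset m} {c : ℝ} (hc : ∀ i ∈ S, c ≤ hA.eigenvalues i)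
    {x : EuclideanSpace ℝ m} (hx : x ∈ hA.eigenvectorSpan S) :
    c * ⟪x, x⟫ ≤ ⟪x, toEuclideanLin A x⟫ := by
  rw [hA.inner_toEuclideanLin_self_eq_sum, hA.inner_self_eq_sum_sq, Finset.mul_sum]
  refine Finset.sum_le_sum fun i _ => ?_
  by_cases hi : i ∈ S
  · exact mul_le_mul_of_nonneg_right (hc i hi) (sq_nonneg _)
  · simp [hA.inner_eigenvectorBasis_eq_zero hx hi]

end

lemma le_add_of_inner_toEuclideanLin_sub_le {n : ℕ}
    {A B : Matrix (Fin n) (Fin n) ℝ} (hA : A.IsHermitian) (hB : B.IsHermitian)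
    {μ ν : Fin n → ℝ} {σA σB : Equiv.Perm (Fin n)}
    (hμ : μ = hA.eigenvalues ∘ σA) (hμmono : Monotone μ)
    (hν : ν = hB.eigenvalues ∘ σB) (hνmono : Monotone ν) {c : ℝ}
    (hBA : ∀ x, ⟪x, toEuclideanLin (B - A) x⟫ ≤ c * ⟪x, x⟫) (l : Fin n) :
    ν l ≤ μ l + c := by
  set U := hA.eigenvectorSpan ((Finset.Iic l).map σA.toEmbedding)
  set V := hB.eigenvectorSpan ((Finset.Ici l).map σB.toEmbedding)
  have hdim : finrank ℝ (EuclideanSpace ℝ (Fin n)) < finrank ℝ U + finrank ℝ V := by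
    simp only [U, V, finrank_eigenvectorSpan, Finset.card_map, Fin.card_Iic,
      Fin.card_Ici, finrank_euclideanSpace_fin]
    omega
  obtain ⟨x, hxU, hxV, hx⟩ := Submodule.exists_mem_inf_ne_zero_of_finrank_lt hdim
  have hAx : ⟪x, toEuclideanLin A x⟫ ≤ μ l * ⟪x, x⟫ := by
    refine hA.inner_toEuclideanLin_self_le (fun i hi => ?_) hxU
    obtain ⟨j, hj, rfl⟩ := Finset.mem_map.mp hi
    exact hμ ▸ hμmono (Finset.mem_Iic.mp hj)
  have hBx : ν l * ⟪x, x⟫ ≤ ⟪x, toEuclideanLin B x⟫ := by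
    refine hB.le_inner_toEuclideanLin_self (fun i hi => ?_) hxV
    obtain ⟨j, hj, rfl⟩ := Finset.mem_map.mp hi
    exact hν ▸ hνmono (Finset.mem_Ici.mp hj)
  refine le_of_mul_le_mul_right ?_ (real_inner_self_pos.mpr hx)
  calc ν l * ⟪x, x⟫ ≤ ⟪x, toEuclideanLin B x⟫ := hBx
    _ = ⟪x, toEuclideanLin A x⟫ + ⟪x, toEuclideanLin (B - A) x⟫ := by
        rw [map_sub, LinearMap.sub_apply, inner_sub_right, add_sub_cancel]
    _ ≤ μ l * ⟪x, x⟫ + c * ⟪x, x⟫ := add_le_add hAx (hBA x)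
    _ = (μ l + c) * ⟪x, x⟫ := by ring

end Matrix.IsHermitian

/-- If `μ` and `ν` are the eigenvalues of the real symmetric matrices `A` and `B`, listed with
multiplicity in nondecreasing order, then `|μ l - ν l| ≤ n · max_{i,j} |A i j - B i j|` for
every `l`. -/
theorem stmt3 {n : ℕ} (A B : Matrix (Fin n) (Fin n) ℝ)
    (hA : A.IsHermitian) (hB : B.IsHermitian)
    (μ ν : Fin n → ℝ) (σA σB : Equiv.Perm (Fin n))
    (hμ : μ = hA.eigenvalues ∘ σA) (hμmono : Monotone μ)
    (hν : ν = hB.eigenvalues ∘ σB) (hνmono : Monotone ν) :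
    ∀ l : Fin n, |μ l - ν l| ≤ n * ⨆ i, ⨆ j, |A i j - B i j| := by
  intro l
  set K := ⨆ i, ⨆ j, |A i j - B i j|
  have hK : ∀ i j, |A i j - B i j| ≤ K := fun i j =>
    (le_ciSup (f := fun j => |A i j - B i j|) (Finite.bddAbove_range _) j).trans
      (le_ciSup (f := fun i => ⨆ j, |A i j - B i j|) (Finite.bddAbove_range _) i)
  have hK0 : 0 ≤ K := (abs_nonneg _).trans (hK l l)
  have hAB x : ⟪x, toEuclideanLin (A - B) x⟫ ≤ n * K * ⟪x, x⟫ := by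
    simpa using (A - B).inner_toEuclideanLin_self_le_card_mul hK0 hK x
  have hBA x : ⟪x, toEuclideanLin (B - A) x⟫ ≤ n * K * ⟪x, x⟫ := by
    simpa using (B - A).inner_toEuclideanLin_self_le_card_mul hK0
      (fun i j => abs_sub_comm (B i j) (A i j) ▸ hK i j) x
  rw [abs_sub_le_iff]
  exact ⟨by linarith [hB.le_add_of_inner_toEuclideanLin_sub_le hA hν hνmono hμ hμmono hAB l],
    by linarith [hA.le_add_of_inner_toEuclideanLin_sub_le hB hμ hμmono hν hνmono hBA l]⟩
end

section
/- Fix n ≥ 2, h > 0, x ∈ ℝⁿ, a function u : ℝⁿ → ℝ, and a real number f. For t ∈ ℝ, let u_t : ℝⁿ → ℝ be defined by u_t(y) = u(y) for y ≠ x and u_t(x) = t. Then the function t ↦ (Δ_d u_t(x))² + (1/c(2,n)) · (f − S_2(H_d u_t(x))) is constant on ℝ, i.e., its value does not depend on t. -/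
/-- `Sk k A` is the sum of all `k × k` principal minors of the matrix `A`. -/
noncomputable def Sk {n : ℕ} (k : ℕ) (A : Matrix (Fin n) (Fin n) ℝ) : ℝ :=
  ∑ s ∈ Finset.univ.powersetCard k,
    (A.submatrix (fun i : {x : Fin n // x ∈ s} => i.1) (fun j : {x : Fin n // x ∈ s} => j.1)).det

/-- The `i`-th standard basis vector of `ℝⁿ`. -/
noncomputable def evec {n : ℕ} (i : Fin n) : Fin n → ℝ := Pi.single i 1

/-- Discrete Laplacian of `u : ℝⁿ → ℝ` at `x` with mesh size `h`. -/
noncomputable def discLap {n : ℕ} (h : ℝ) (u : (Fin n → ℝ) → ℝ) (x : Fin n → ℝ) : ℝ :=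
  ∑ i, (u (x + h • evec i) - 2 * u x + u (x - h • evec i)) / h ^ 2

/-- Discrete Hessian of `u : ℝⁿ → ℝ` at `x` with mesh size `h`: central second differences on
the diagonal and central mixed second differences off the diagonal. -/
noncomputable def discHess {n : ℕ} (h : ℝ) (u : (Fin n → ℝ) → ℝ) (x : Fin n → ℝ) :
    Matrix (Fin n) (Fin n) ℝ :=
  fun i j =>
    if i = j then (u (x + h • evec i) - 2 * u x + u (x - h • evec i)) / h ^ 2
    else (u (x + h • evec i + h • evec j) + u (x - h • evec i - h • evec j)
        - u (x + h • evec i - h • evec j) - u (x - h • evec i + h • evec j)) / (4 * h ^ 2)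

/-!
Redefining `u` at `x` does not touch the off-diagonal entries of `H_d u(x)` (they only sample
points `x ± h eⁱ ± h eʲ ≠ x`) and shifts every diagonal entry by the same `δ`, so
`H_d u_t(x) = A + δ I` and `Δ_d u_t(x) = tr (A + δ I)`. Expanding the `2 × 2` minors gives
`S₂(A + δ I) = S₂(A) + (n - 1) δ tr A + C(n,2) δ²`, while
`(tr A + n δ)² = (tr A)² + 2 n δ tr A + n² δ²`; the weight `1 / c(2,n) = n² / C(n,2)`
is exactly the one that cancels the `δ`-terms.
-/

open Matrix Finset

lemma Matrix.det_add_smul_one_of_card_eq_two {ι R : Type*} [Fintype ι] [DecidableEq ι]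
    [CommRing R] (hι : Fintype.card ι = 2) (B : Matrix ι ι R) (δ : R) :
    (B + δ • 1).det = B.det + δ * B.trace + δ ^ 2 := by
  let e := (Fintype.equivFinOfCardEq hι).symm
  have htrace : B.trace = B (e 0) (e 0) + B (e 1) (e 1) := by
    rw [trace, ← e.sum_comp, Fin.sum_univ_two, diag_apply, diag_apply]
  have he : e 0 ≠ e 1 := e.injective.ne (by decide)
  rw [← det_submatrix_equiv_self e, ← det_submatrix_equiv_self e B, det_fin_two, det_fin_two,
    htrace]
  simp only [submatrix_apply, add_apply, smul_apply, one_apply_eq, one_apply_ne he,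
    one_apply_ne he.symm, smul_eq_mul]
  ring

lemma Finset.sum_powersetCard_sum {α M : Type*} [DecidableEq α] [AddCommMonoid M]
    (t : Finset α) {m : ℕ} (hm : 0 < m) (g : α → M) :
    ∑ s ∈ t.powersetCard m, ∑ k ∈ s, g k = (#t - 1).choose (m - 1) • ∑ k ∈ t, g k := by
  have hsub : ∀ s ∈ t.powersetCard m,
      ∑ k ∈ s, g k = ∑ k ∈ t, if k ∈ s then g k else 0 :=
    fun s hs => by rw [sum_ite_mem, inter_eq_right.mpr (mem_powersetCard.mp hs).1]
  rw [sum_congr rfl hsub, sum_comm, smul_sum]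
  refine sum_congr rfl fun k hk => ?_
  have hcount : #{s ∈ t.powersetCard m | k ∈ s} = (#t - 1).choose (m - 1) := by
    simpa only [singleton_subset_iff, card_singleton] using
      card_filter_powersetCard_subset {k} t m (singleton_subset_iff.mpr hk) hm
  rw [← sum_filter, sum_const, hcount]

lemma Sk_two_add_smul_one {n : ℕ} (A : Matrix (Fin n) (Fin n) ℝ) (δ : ℝ) :
    Sk 2 (A + δ • 1) = Sk 2 A + (n - 1 : ℕ) * δ * A.trace + n.choose 2 * δ ^ 2 := by
  have hminor : ∀ s ∈ univ.powersetCard 2,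
      ((A + δ • 1).submatrix (Subtype.val : s → Fin n) Subtype.val).det
        = (A.submatrix (Subtype.val : s → Fin n) Subtype.val).det
          + δ * ∑ k ∈ s, A k k + δ ^ 2 := by
    intro s hs
    have hshift : (A + δ • 1).submatrix (Subtype.val : s → Fin n) Subtype.val
        = A.submatrix Subtype.val Subtype.val + δ • (1 : Matrix s s ℝ) := by
      ext i j
      simp only [submatrix_apply, Matrix.add_apply, Matrix.smul_apply, one_apply,
        Subtype.ext_iff]
    rw [hshift, det_add_smul_one_of_card_eq_two (by simpa using (mem_powersetCard.mp hs).2)]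
    simp only [trace, diag_apply, submatrix_apply, sum_coe_sort s (fun k => A k k)]
  rw [Sk, Sk, sum_congr rfl hminor, sum_add_distrib, sum_add_distrib, ← mul_sum,
    sum_powersetCard_sum _ two_pos, sum_const, card_powersetCard, card_univ, Fintype.card_fin]
  simp only [trace, diag_apply, Nat.reduceSub, Nat.choose_one_right, nsmul_eq_mul]
  ring

lemma trace_sq_add_Sk_two_add_smul_one_eq {n : ℕ} (hn : 2 ≤ n) (A : Matrix (Fin n) (Fin n) ℝ)
    (δ f : ℝ) :
    (A + δ • 1).trace ^ 2 + 1 / ((n.choose 2 : ℝ) / (n : ℝ) ^ 2) * (f - Sk 2 (A + δ • 1))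
      = A.trace ^ 2 + 1 / ((n.choose 2 : ℝ) / (n : ℝ) ^ 2) * (f - Sk 2 A) := by
  have hn' : (n : ℝ) - 1 ≠ 0 := by
    rw [sub_ne_zero]; exact_mod_cast (by omega : n ≠ 1)
  have hn0 : (n : ℝ) ≠ 0 := by exact_mod_cast (by omega : n ≠ 0)
  rw [trace_add, trace_smul, trace_one, Sk_two_add_smul_one, Nat.cast_choose_two,
    Nat.cast_pred (by omega), Fintype.card_fin, smul_eq_mul]
  field_simp
  ring

section discrete

variable {n : ℕ} {h : ℝ} {x : Fin n → ℝ}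

lemma trace_discHess (u : (Fin n → ℝ) → ℝ) : (discHess h u x).trace = discLap h u x := by
  simp only [trace, diag_apply, discHess, discLap, ↓reduceIte]

lemma discHess_eq_add_smul_one (hh : h ≠ 0) {v w : (Fin n → ℝ) → ℝ}
    (hvw : ∀ y, y ≠ x → v y = w y) :
    discHess h v x = discHess h w x + (2 * (w x - v x) / h ^ 2) • 1 := by
  have hne : ∀ (y : Fin n → ℝ) (i : Fin n), y i ≠ x i → v y = w y :=
    fun _ i hyi => hvw _ fun hyx => hyi (congrFun hyx i)
  ext i j
  by_cases hij : i = j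
  · subst hij
    simp only [discHess, ↓reduceIte, Matrix.add_apply, Matrix.smul_apply, one_apply_eq,
      smul_eq_mul, mul_one]
    rw [hne (x + h • evec i) i (by simp [evec, hh]),
      hne (x - h • evec i) i (by simp [evec, hh])]
    field_simp
    ring
  · simp only [discHess, if_neg hij, Matrix.add_apply, Matrix.smul_apply, one_apply_ne hij,
      smul_eq_mul, mul_zero, add_zero]
    rw [hne (x + h • evec i + h • evec j) i (by simp [evec, hij, hh]),
      hne (x - h • evec i - h • evec j) i (by simp [evec, hij, hh]),
      hne (x + h • evec i - h • evec j) i (by simp [evec, hij, hh]),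
      hne (x - h • evec i + h • evec j) i (by simp [evec, hij, hh])]

end discrete

/-- For `u_t` obtained from `u` by redefining its value at the grid point `x` to be `t`, the
quantity `(Δ_d u_t(x))² + (1/c(2,n)) (f - S_2(H_d u_t(x)))` does not depend on `t`, where
`c(2,n) = C(n,2)/n²`. -/
theorem stmt10 {n : ℕ} (hn : 2 ≤ n) (h : ℝ) (hh : 0 < h) (x : Fin n → ℝ)
    (u : (Fin n → ℝ) → ℝ) (f : ℝ) :
    ∀ t₁ t₂ : ℝ,
      (discLap h (Function.update u x t₁) x) ^ 2
          + 1 / ((n.choose 2 : ℝ) / (n : ℝ) ^ 2)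
            * (f - Sk 2 (discHess h (Function.update u x t₁) x))
        = (discLap h (Function.update u x t₂) x) ^ 2
          + 1 / ((n.choose 2 : ℝ) / (n : ℝ) ^ 2)
            * (f - Sk 2 (discHess h (Function.update u x t₂) x)) := by
  intro t₁ t₂
  have hshift := discHess_eq_add_smul_one (x := x) hh.ne'
    (v := Function.update u x t₁) (w := Function.update u x t₂)
    fun y hy => by rw [Function.update_of_ne hy, Function.update_of_ne hy]
  rw [← trace_discHess, ← trace_discHess, hshift, trace_sq_add_Sk_two_add_smul_one_eq hn]
end

section
/- Let h > 0, x ∈ ℝ, and let v : ℝ → ℝ be four times continuously differentiable on the interval [x−h, x+h]. Then |v''(x) − (v(x+h) − 2v(x) + v(x−h))/h²| ≤ (h²/12) · sup_{t ∈ [x−h, x+h]} |v⁽⁴⁾(t)|. -/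
/-!
Expand `v` to third order about `x` towards `x + h` and towards `x - h`, with Lagrange remainders
and all derivatives taken within `[x - h, x + h]`. In the sum of the two expansions the odd terms
cancel, leaving `h² v''(x) + (h⁴/24) (v⁽⁴⁾(ξ) + v⁽⁴⁾(η))`; each fourth derivative is bounded by the
supremum, and at the interior point `x` the derivative within the interval is the usual `v''`.
-/

open Set Nat

lemma iteratedDerivWithin_subset {f : ℝ → ℝ} {s t : Set ℝ} {n : ℕ} {N : WithTop ℕ∞}
    (st : s ⊆ t) (hs : UniqueDiffOn ℝ s) (ht : UniqueDiffOn ℝ t) (hf : ContDiffOn ℝ N f t)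
    (hn : n ≤ N) {x : ℝ} (hx : x ∈ s) :
    iteratedDerivWithin n f s x = iteratedDerivWithin n f t x := by
  simp only [iteratedDerivWithin, iteratedFDerivWithin_subset st hs ht (hf.of_le hn) hx]

/-- Unlike `taylor_mean_remainder_lagrange`, the derivatives are taken within the ambient `s`
rather than `uIcc x₀ x`, so expansions on the two sides of `x₀` have the same coefficients. -/
theorem exists_taylor_mean_remainder_lagrange {f : ℝ → ℝ} {s : Set ℝ} {n : ℕ}
    (hs : UniqueDiffOn ℝ s) (hs' : s.OrdConnected) (hf : ContDiffOn ℝ (n + 1) f s)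
    {x₀ x : ℝ} (hx₀ : x₀ ∈ s) (hx : x ∈ s) (hne : x₀ ≠ x) :
    ∃ ξ ∈ s, f x - taylorWithinEval f n s x₀ x =
      iteratedDerivWithin (n + 1) f s ξ * (x - x₀) ^ (n + 1) / (n + 1)! := by
  set I := uIcc x₀ x
  have hIs : I ⊆ s := hs'.uIcc_subset hx₀ hx
  have hI : UniqueDiffOn ℝ I := uniqueDiffOn_Icc (inf_lt_sup.mpr hne)
  have hfI : ContDiffOn ℝ (n + 1) f I := hf.mono hIs
  have hderiv {k : ℕ} (hk : k ≤ n + 1) {y : ℝ} (hy : y ∈ I) :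
      iteratedDerivWithin k f I y = iteratedDerivWithin k f s y :=
    iteratedDerivWithin_subset hIs hI hs hf (by exact_mod_cast hk) hy
  obtain ⟨ξ, hξ, hrem⟩ := taylor_mean_remainder_lagrange hne
    (hfI.of_le (by exact_mod_cast n.le_succ))
    ((hfI.differentiableOn_iteratedDerivWithin (by exact_mod_cast n.lt_succ_self) hI).mono
      uIoo_subset_uIcc_self)
  have hξI : ξ ∈ I := uIoo_subset_uIcc_self hξ
  have htaylor : taylorWithinEval f n I x₀ x = taylorWithinEval f n s x₀ x := by
    simp only [taylor_within_apply]
    exact Finset.sum_congr rfl fun k hk => by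
      rw [hderiv (Finset.mem_range.1 hk).le left_mem_uIcc]
  exact ⟨ξ, hIs hξI, by rw [← htaylor, hrem, hderiv le_rfl hξI]⟩

theorem exists_second_difference_eq {v : ℝ → ℝ} {s : Set ℝ} (hs : UniqueDiffOn ℝ s)
    (hs' : s.OrdConnected) (hv : ContDiffOn ℝ 4 v s) {x h : ℝ} (hh : 0 < h)
    (hxh : x + h ∈ s) (hxh' : x - h ∈ s) :
    ∃ ξ ∈ s, ∃ η ∈ s, v (x + h) - 2 * v x + v (x - h) =
      h ^ 2 * iteratedDerivWithin 2 v s x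
        + h ^ 4 / 24 * (iteratedDerivWithin 4 v s ξ + iteratedDerivWithin 4 v s η) := by
  have hx : x ∈ s := hs'.out hxh' hxh ⟨by linarith, by linarith⟩
  obtain ⟨ξ, hξ, hright⟩ :=
    exists_taylor_mean_remainder_lagrange (n := 3) hs hs' hv hx hxh (by linarith)
  obtain ⟨η, hη, hleft⟩ :=
    exists_taylor_mean_remainder_lagrange (n := 3) hs hs' hv hx hxh' (by linarith)
  refine ⟨ξ, hξ, η, hη, ?_⟩
  simp only [taylor_within_apply, Finset.sum_range_succ, Finset.sum_range_zero,
    iteratedDerivWithin_zero, smul_eq_mul] at hright hleft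
  norm_num [Nat.factorial] at hright hleft
  linear_combination hright + hleft

lemma abs_le_iSup_abs_of_continuousOn {α : Type*} [TopologicalSpace α] {g : α → ℝ}
    {s : Set α} (hs : IsCompact s) (hg : ContinuousOn g s) {t : α} (ht : t ∈ s) :
    |g t| ≤ ⨆ y : s, |g y| := by
  refine le_ciSup (f := fun y : s => |g y|) ?_ ⟨t, ht⟩
  refine (hs.image_of_continuousOn hg.abs).bddAbove.mono ?_
  rintro _ ⟨y, rfl⟩
  exact mem_image_of_mem _ y.2

/-- For `v` four times continuously differentiable on `[x-h, x+h]`, the central second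
difference quotient approximates `v''(x)` with error at most
`(h²/12) sup_{t ∈ [x-h,x+h]} |v⁽⁴⁾(t)|`. -/
theorem stmt12 (h x : ℝ) (hh : 0 < h) (v : ℝ → ℝ)
    (hv : ContDiffOn ℝ 4 v (Set.Icc (x - h) (x + h))) :
    |deriv (deriv v) x - (v (x + h) - 2 * v x + v (x - h)) / h ^ 2|
      ≤ h ^ 2 / 12 *
        ⨆ t : Set.Icc (x - h) (x + h),
          |iteratedDerivWithin 4 v (Set.Icc (x - h) (x + h)) t| := by
  set s := Icc (x - h) (x + h)
  set M := ⨆ t : s, |iteratedDerivWithin 4 v s t|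
  have hs : UniqueDiffOn ℝ s := uniqueDiffOn_Icc (by linarith)
  obtain ⟨ξ, hξ, η, hη, hdiff⟩ := exists_second_difference_eq hs ordConnected_Icc hv hh
    (right_mem_Icc.2 (by linarith)) (left_mem_Icc.2 (by linarith))
  have hv'' : deriv (deriv v) x = iteratedDerivWithin 2 v s x := by
    have hvx : ContDiffAt ℝ 4 v x := hv.contDiffAt (Icc_mem_nhds (by linarith) (by linarith))
    rw [iteratedDerivWithin_eq_iteratedDeriv hs (hvx.of_le (by norm_num))
      ⟨by linarith, by linarith⟩, iteratedDeriv_succ, iteratedDeriv_one]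
  have hbound {t : ℝ} (ht : t ∈ s) : |iteratedDerivWithin 4 v s t| ≤ M :=
    abs_le_iSup_abs_of_continuousOn isCompact_Icc
      (hv.continuousOn_iteratedDerivWithin le_rfl hs) ht
  have herror : deriv (deriv v) x - (v (x + h) - 2 * v x + v (x - h)) / h ^ 2
      = -(h ^ 2 / 24 * (iteratedDerivWithin 4 v s ξ + iteratedDerivWithin 4 v s η)) := by
    rw [hv'', hdiff]
    field_simp
    ring
  rw [herror, abs_neg, abs_mul, abs_of_pos (by positivity)]
  calc h ^ 2 / 24 * |iteratedDerivWithin 4 v s ξ + iteratedDerivWithin 4 v s η|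
      ≤ h ^ 2 / 24 * (M + M) := by
        gcongr
        exact (abs_add_le _ _).trans (add_le_add (hbound hξ) (hbound hη))
    _ = h ^ 2 / 12 * M := by ring
end
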